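/- Let (v,b) satisfy condition (C1) with associated pair (λ,ε), so that ε ∈ {−2,−1,1,2}. Then every triple system TS(v;b) (V,𝓕) satisfies Σ_{{x,y}∈binom(V,2)} (λ_{x,y})² ≥ binom(v,2)·λ² + 2ελ + 2 + |ε|, and equality holds for a TS(v;b) exactly when its defect graph D is of one of the following forms: (i) D = D_1 ∪ D_{−1} (defect 1) with (|D_1|,|D_{−1}|) = (1+ε, 1) if ε ∈ {1,2} and (|D_1|,|D_{−1}|) = (1, 1−ε) if ε ∈ {−1,−2}; or (ii), possible only when ε ∈ {−2,2}, D = D_ε with |D_ε| = 1. -/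
import Mathlib


namespace DataPlacement

open Finset

variable {α : Type*} [DecidableEq α]

/-- Number of blocks of the family `F` (with multiplicity) containing `T`. -/
def lamF (F : Multiset (Finset α)) (T : Finset α) : ℕ :=
  Multiset.card (F.filter fun B => T ⊆ B)

/-- Triple system with `b` blocks on a point set `X` of size `v`. -/
def IsTSOn (X : Finset α) (v b : ℕ) (F : Multiset (Finset α)) : Prop :=
  X.card = v ∧ Multiset.card F = b ∧ ∀ B ∈ F, B.card = 3 ∧ B ⊆ X

/-- `(l, e)` is the pair associated with `(v, b)`:
`3b = l·v(v−1)/2 + e` with `−v/2 < e < v/2`. -/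
def AssocPair (v b l : ℕ) (e : ℤ) : Prop :=
  6 * (b : ℤ) = (l : ℤ) * v * ((v : ℤ) - 1) + 2 * e ∧
    -(v : ℤ) < 2 * e ∧ 2 * e < (v : ℤ)

/-- Condition (C1). -/
def CondC1 (v b : ℕ) : Prop :=
  v % 3 = 2 ∧ ∃ l : ℕ, 0 < l ∧
    ((v % 6 = 5 ∧ (l % 3 = 1 ∨ l % 3 = 2)) ∨
     (v % 6 = 2 ∧ (l % 6 = 2 ∨ l % 6 = 4))) ∧
    (b = l * v * (v - 1) / 6 ∨ b = (l * v * (v - 1) + 5) / 6)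

/-- Condition (C2). -/
def CondC2 (v b : ℕ) : Prop :=
  v % 2 = 0 ∧ ∃ l : ℕ, 0 < l ∧ l % 2 = 1 ∧
    (l : ℤ) * v * ((v : ℤ) - 1) - v < 6 * (b : ℤ) ∧
    6 * (b : ℤ) < (l : ℤ) * v * ((v : ℤ) - 1) + v

/-- Pairs of points of `X` whose block count equals `l + i`. -/
def Dlev (X : Finset α) (F : Multiset (Finset α)) (l : ℕ) (i : ℤ) :
    Finset (Finset α) :=
  (X.powersetCard 2).filter fun p => (lamF F p : ℤ) = (l : ℤ) + i

/-- Every pair of points of `X` lies in `l−1`, `l`, or `l+1` blocks. -/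
def PairRangeOn (X : Finset α) (F : Multiset (Finset α)) (l : ℕ) : Prop :=
  ∀ p ∈ X.powersetCard 2,
    (l : ℤ) - 1 ≤ (lamF F p : ℤ) ∧ (lamF F p : ℤ) ≤ (l : ℤ) + 1

def IsTriangle (D : Finset (Finset α)) : Prop :=
  ∃ x y z : α, x ≠ y ∧ x ≠ z ∧ y ≠ z ∧
    D = {({x, y} : Finset α), {y, z}, {x, z}}

def IsFourCycle (D : Finset (Finset α)) : Prop :=
  ∃ x y z w : α, x ≠ y ∧ x ≠ z ∧ x ≠ w ∧ y ≠ z ∧ y ≠ w ∧ z ≠ w ∧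
    D = {({x, y} : Finset α), {y, z}, {z, w}, {x, w}}

/-- `D` is a perfect matching on the point set `X`. -/
def IsPerfectMatchingOn (X : Finset α) (D : Finset (Finset α)) : Prop :=
  (∀ p ∈ D, p.card = 2 ∧ p ⊆ X) ∧ ∀ x ∈ X, ∃! p, p ∈ D ∧ x ∈ p

/-- Defect-graph shape required for nearly 2-balance under (C1). -/
def C1ShapeOn (X : Finset α) (F : Multiset (Finset α)) (l : ℕ) (e : ℤ) : Prop :=
  (e = 1 ∧ IsTriangle (Dlev X F l 1 ∪ Dlev X F l (-1)) ∧
     (Dlev X F l 1).card = 2 ∧ (Dlev X F l (-1)).card = 1) ∨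
  (e = -1 ∧ IsTriangle (Dlev X F l 1 ∪ Dlev X F l (-1)) ∧
     (Dlev X F l 1).card = 1 ∧ (Dlev X F l (-1)).card = 2) ∨
  (e = 2 ∧ IsFourCycle (Dlev X F l 1 ∪ Dlev X F l (-1)) ∧
     (Dlev X F l 1).card = 3 ∧ (Dlev X F l (-1)).card = 1) ∨
  (e = -2 ∧ IsFourCycle (Dlev X F l 1 ∪ Dlev X F l (-1)) ∧
     (Dlev X F l 1).card = 1 ∧ (Dlev X F l (-1)).card = 3)

/-- Defect-graph shape required for nearly 2-balance under (C2)
(here `v = X.card`). -/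
def C2ShapeOn (X : Finset α) (v : ℕ) (F : Multiset (Finset α)) (l : ℕ) (e : ℤ) : Prop :=
  (((v : ℤ) - 2 * e) % 4 = 0 ∧
    IsPerfectMatchingOn X (Dlev X F l 1 ∪ Dlev X F l (-1)) ∧
    4 * ((Dlev X F l 1).card : ℤ) = (v : ℤ) + 2 * e ∧
    4 * ((Dlev X F l (-1)).card : ℤ) = (v : ℤ) - 2 * e) ∨
  (((v : ℤ) - 2 * e) % 4 ≠ 0 ∧
    ∃ (c a₂ a₃ a₄ : α) (star : Finset (Finset α)),
      c ∈ X ∧ a₂ ∈ X ∧ a₃ ∈ X ∧ a₄ ∈ X ∧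
      c ≠ a₂ ∧ c ≠ a₃ ∧ c ≠ a₄ ∧ a₂ ≠ a₃ ∧ a₂ ≠ a₄ ∧ a₃ ≠ a₄ ∧
      star = {({c, a₂} : Finset α), {c, a₃}, {c, a₄}} ∧
      star ⊆ Dlev X F l 1 ∪ Dlev X F l (-1) ∧
      IsPerfectMatchingOn (X \ {c, a₂, a₃, a₄})
        ((Dlev X F l 1 ∪ Dlev X F l (-1)) \ star) ∧
      (((star ∩ Dlev X F l 1).card = 2 ∧ (star ∩ Dlev X F l (-1)).card = 1 ∧
          4 * (((Dlev X F l 1) \ star).card : ℤ) = (v : ℤ) - 6 + 2 * e ∧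
          4 * (((Dlev X F l (-1)) \ star).card : ℤ) = (v : ℤ) - 2 - 2 * e) ∨
        ((star ∩ Dlev X F l 1).card = 1 ∧ (star ∩ Dlev X F l (-1)).card = 2 ∧
          4 * (((Dlev X F l 1) \ star).card : ℤ) = (v : ℤ) - 2 + 2 * e ∧
          4 * (((Dlev X F l (-1)) \ star).card : ℤ) = (v : ℤ) - 6 - 2 * e)))

/-- `F` is 3-balanced on `X`: the multiplicities of any two triples of `X`
differ by at most one. -/
def ThreeBalancedOn (X : Finset α) (F : Multiset (Finset α)) : Prop :=
  ∀ T₁ ∈ X.powersetCard 3, ∀ T₂ ∈ X.powersetCard 3, F.count T₁ ≤ F.count T₂ + 1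

/-- Nearly well-balanced triple system NWBTS(v;b) on the point set `X`. -/
def IsNWBTSOn (X : Finset α) (v b : ℕ) (F : Multiset (Finset α)) : Prop :=
  IsTSOn X v b F ∧ ThreeBalancedOn X F ∧
  ∃ (l : ℕ) (e : ℤ), 0 < l ∧ AssocPair v b l e ∧ PairRangeOn X F l ∧
    ((CondC1 v b ∧ C1ShapeOn X F l e) ∨ (CondC2 v b ∧ C2ShapeOn X v F l e))

/-- `B` is an S_mu(2,3,·) design on the point set `X`. -/
def IsSDesignOn (X : Finset α) (mu : ℕ) (B : Multiset (Finset α)) : Prop :=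
  (∀ A ∈ B, A.card = 3 ∧ A ⊆ X) ∧ ∀ p ∈ X.powersetCard 2, lamF B p = mu

/-- `B` is a GDD_mu(2,3,·) of type `1^{·}u^1` on `X` with long group `U`. -/
def IsGDD1u (X : Finset α) (mu u : ℕ) (U : Finset α) (B : Multiset (Finset α)) : Prop :=
  U ⊆ X ∧ U.card = u ∧
  (∀ A ∈ B, A.card = 3 ∧ A ⊆ X ∧ (A ∩ U).card ≤ 1) ∧
  ∀ p ∈ X.powersetCard 2, ¬ p ⊆ U → lamF B p = mu

/-- `B` is a GDD_mu(2,3,·) with group family `G`. -/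
def IsGDDgroups (mu : ℕ) {n : ℕ} (G : Fin n → Finset α) (B : Multiset (Finset α)) : Prop :=
  (∀ A ∈ B, A.card = 3 ∧ A ⊆ Finset.univ.biUnion G ∧ ∀ i, (A ∩ G i).card ≤ 1) ∧
  ∀ x y : α, x ≠ y → (∃ i j, i ≠ j ∧ x ∈ G i ∧ y ∈ G j) → lamF B {x, y} = mu

/-- Nearly group divisible design NGDD(2,3,·) of type `2^{(m,n)}u^1` on `X`. -/
def IsNGDD (X : Finset α) (m n u : ℕ) (G : Fin (m + n) → Finset α) (U : Finset α)
    (B : Multiset (Finset α)) : Prop :=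
  (∀ i, (G i).card = 2 ∧ G i ⊆ X) ∧ U.card = u ∧ U ⊆ X ∧
  (∀ i j, i ≠ j → Disjoint (G i) (G j)) ∧ (∀ i, Disjoint (G i) U) ∧
  U ∪ Finset.univ.biUnion G = X ∧
  (∀ A ∈ B, A.card = 3 ∧ A ⊆ X) ∧
  (∀ i : Fin (m + n), (i : ℕ) < m → lamF B (G i) = 2) ∧
  (∀ i : Fin (m + n), m ≤ (i : ℕ) → lamF B (G i) = 0) ∧
  (∀ p ∈ U.powersetCard 2, lamF B p = 0) ∧
  (∀ p ∈ X.powersetCard 2, (∀ i, ¬ p ⊆ G i) → ¬ p ⊆ U → lamF B p = 1)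

/-- Candelabra system CS(g^n : s) on `X` with stem `S` and groups `G`. -/
def IsCS (X : Finset α) (g n s : ℕ) (S : Finset α) (G : Fin n → Finset α)
    (A : Multiset (Finset α)) : Prop :=
  S.card = s ∧ S ⊆ X ∧ (∀ i, (G i).card = g ∧ G i ⊆ X) ∧
  (∀ i j, i ≠ j → Disjoint (G i) (G j)) ∧ (∀ i, Disjoint (G i) S) ∧
  S ∪ Finset.univ.biUnion G = X ∧
  (∀ B ∈ A, B.card = 3 ∧ B ⊆ X) ∧
  (∀ T ∈ X.powersetCard 3, (∀ i, ¬ T ⊆ S ∪ G i) → lamF A T = 1) ∧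
  (∀ T ∈ X.powersetCard 3, (∃ i, T ⊆ S ∪ G i) → lamF A T = 0)

/-- Partitionable candelabra system PCS(g^n : s). -/
def IsPCS (X : Finset α) (g n s : ℕ) (S : Finset α) (G : Fin n → Finset α)
    (A : Multiset (Finset α)) : Prop :=
  IsCS X g n s S G A ∧
  ∃ (Ax : α → Multiset (Finset α)) (Ai : Fin (s - 2) → Multiset (Finset α)),
    A = (∑ p ∈ X \ S, Ax p) + ∑ i, Ai i ∧
    (∀ i : Fin n, ∀ p ∈ G i, IsGDD1u X 1 (g + s) (G i ∪ S) (Ax p)) ∧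
    (∀ j, IsGDDgroups 1 G (Ai j))

/-- g-PCS_2((2ag)^n : s). -/
def IsGPCS2 (X : Finset α) (a g n s : ℕ) (S : Finset α) (G : Fin n → Finset α)
    (A : Multiset (Finset α)) : Prop :=
  IsCS X (2 * a * g) n s S G A ∧
  ∃ (P : Fin (g * n) → Multiset (Finset α)) (grp : Fin (g * n) → Fin n),
    (∑ i, P i) ≤ A ∧
    (∀ j : Fin n, (Finset.univ.filter fun i => grp i = j).card = g) ∧
    (∀ i, IsGDD1u X 2 (2 * a * g + s) (G (grp i) ∪ S) (P i))

/-- g-PCS_2^r((2ag)^n : s). -/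
def IsGPCS2r (X : Finset α) (a g n s r : ℕ) (S : Finset α) (G : Fin n → Finset α)
    (A : Multiset (Finset α)) : Prop :=
  IsCS X (2 * a * g) n s S G A ∧
  ∃ (P : Fin (g * n) → Multiset (Finset α)) (grp : Fin (g * n) → Fin n),
    (∑ i, P i) ≤ A ∧
    (∀ j : Fin n, (Finset.univ.filter fun i => grp i = j).card = g) ∧
    (∀ i, IsGDD1u X 2 (2 * a * g + s) (G (grp i) ∪ S) (P i)) ∧
    ∃ (i : Fin (g * n)) (N : Multiset (Finset α))
      (Gs : Fin (r + (a * g * (n - 1) - r)) → Finset α),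
      N ≤ P i ∧ IsNGDD X r (a * g * (n - 1) - r) (2 * a * g + s) Gs (G (grp i) ∪ S) N

/-- GDD(3,3,·) of type `g^k` on `X` with groups `H`. -/
def IsGDD3On (X : Finset α) (g : ℕ) {k : ℕ} (H : Fin k → Finset α)
    (A : Multiset (Finset α)) : Prop :=
  (∀ i, (H i).card = g ∧ H i ⊆ X) ∧ (∀ i j, i ≠ j → Disjoint (H i) (H j)) ∧
  Finset.univ.biUnion H = X ∧
  (∀ B ∈ A, B.card = 3 ∧ B ⊆ X ∧ ∀ i, (B ∩ H i).card ≤ 1) ∧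
  (∀ T ∈ X.powersetCard 3, (∀ i, (T ∩ H i).card ≤ 1) → lamF A T = 1)

/-- `B` is a GDD_mu(2,3,·) on the points not in the omitted group `H o`,
with group set `{H i : i ≠ o}`. -/
def IsGDDOmit (mu : ℕ) {k : ℕ} (H : Fin k → Finset α) (o : Fin k)
    (B : Multiset (Finset α)) : Prop :=
  (∀ A ∈ B, A.card = 3 ∧ Disjoint A (H o) ∧ ∀ i, (A ∩ H i).card ≤ 1) ∧
  ∀ x y : α, x ≠ y →
    (∃ i j, i ≠ j ∧ i ≠ o ∧ j ≠ o ∧ x ∈ H i ∧ y ∈ H j) → lamF B {x, y} = mu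

/-- PGDD_2((2g)^{n+1}). -/
def IsPGDD2 (g n : ℕ) (H : Fin (n + 1) → Finset (Fin (2 * g * (n + 1))))
    (A : Multiset (Finset (Fin (2 * g * (n + 1))))) : Prop :=
  IsGDD3On Finset.univ (2 * g) H A ∧
  ∃ (i0 : Fin (n + 1))
    (P : Fin (g * n + 2 * g) → Multiset (Finset (Fin (2 * g * (n + 1)))))
    (f : Fin (g * n + 2 * g) → Fin (n + 1)),
    A = ∑ i, P i ∧
    (∀ j, j ≠ i0 → (Finset.univ.filter fun i => f i = j).card = g) ∧
    (∀ i, f i ≠ i0 → IsGDDOmit 2 H (f i) (P i)) ∧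
    (∀ i, f i = i0 → IsGDDOmit 1 H i0 (P i))

/-- 1-FG(3,(K1,KT),n) of type 1^n. -/
def Is1FG (n : ℕ) (K1 KT : Set ℕ) (A1 AT : Multiset (Finset (Fin n))) : Prop :=
  (∀ B ∈ A1, B.card ∈ K1) ∧ (∀ B ∈ AT, B.card ∈ KT) ∧
  (∀ p ∈ (Finset.univ : Finset (Fin n)).powersetCard 2, lamF A1 p = 1) ∧
  (∀ T ∈ (Finset.univ : Finset (Fin n)).powersetCard 3, lamF (A1 + AT) T = 1)

/-- PICS_2^r((2g)^3 : 0). -/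
def IsPICS2 (g r : ℕ) (G : Fin 3 → Finset (Fin (6 * g)))
    (A : Multiset (Finset (Fin (6 * g)))) : Prop :=
  IsCS Finset.univ (2 * g) 3 0 (∅ : Finset (Fin (6 * g))) G A ∧
  ∃ P : Fin (4 * g - 2) → Multiset (Finset (Fin (6 * g))),
    A = ∑ i, P i ∧
    (∀ i : Fin (4 * g - 2), (i : ℕ) < 2 * g → IsSDesignOn Finset.univ 2 (P i)) ∧
    (∃ i : Fin (4 * g - 2), (i : ℕ) < 2 * g ∧
      ∃ (N : Multiset (Finset (Fin (6 * g))))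
        (Gs : Fin (r + (3 * g - r)) → Finset (Fin (6 * g))),
        N ≤ P i ∧ IsNGDD Finset.univ r (3 * g - r) 0 Gs ∅ N) ∧
    (∀ i : Fin (4 * g - 2), 2 * g ≤ (i : ℕ) → IsGDDgroups 1 G (P i))

/-- Number of ordered pairs of blocks of `F` whose intersection has exactly
`j` points. -/
def interCount (F : Multiset (Finset α)) (j : ℕ) : ℕ :=
  Multiset.card
    ((F.bind fun A => F.map fun B => (A, B)).filter fun p => (p.1 ∩ p.2).card = j)

/-- The polynomial `P(F, x) = Σ_{j=0}^{3} v_j x^j`. -/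
noncomputable def Pval (F : Multiset (Finset α)) (x : ℝ) : ℝ :=
  ∑ j ∈ Finset.range 4, (interCount F j : ℝ) * x ^ j

/-- Optimal data placement for triple replication. -/
def IsOptimalDP (v b : ℕ) (F : Multiset (Finset (Fin v))) : Prop :=
  IsTSOn Finset.univ v b F ∧
  ∀ F' : Multiset (Finset (Fin v)), IsTSOn Finset.univ v b F' →
    ∀ x : ℝ, 1 ≤ x → Pval F x ≤ Pval F' x


/-! Auxiliary lemmas for `stmt_0`. -/

lemma lamF_cons (B : Finset α) (F : Multiset (Finset α)) (T : Finset α) :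
    lamF (B ::ₘ F) T = (if T ⊆ B then 1 else 0) + lamF F T := by
  unfold lamF
  rw [Multiset.filter_cons, Multiset.card_add]
  congr 1
  split_ifs <;> simp

lemma sum_lamF (s : Finset (Finset α)) (F : Multiset (Finset α)) :
    ∑ p ∈ s, lamF F p = (F.map fun B => (s.filter fun p => p ⊆ B).card).sum := by
  induction F using Multiset.induction with
  | empty => simp [lamF]
  | cons B F ih =>
    simp only [lamF_cons, Finset.sum_add_distrib, ih, Multiset.map_cons, Multiset.sum_cons]
    rw [Finset.sum_boole]
    simp [add_comm]

lemma card_pairs_mem (B : Finset α) (x : α) (hx : x ∈ B) :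
    ((B.powersetCard 2).filter fun p => x ∈ p).card = B.card - 1 := by
  rw [← Finset.card_erase_of_mem hx]
  symm
  apply Finset.card_bij (fun y _ => ({x, y} : Finset α))
  · intro y hy
    obtain ⟨hyx, hyB⟩ := Finset.mem_erase.1 hy
    simp only [mem_filter, Finset.mem_powersetCard]
    refine ⟨⟨?_, ?_⟩, by simp⟩
    · intro z hz; simp only [mem_insert, mem_singleton] at hz
      rcases hz with rfl | rfl <;> assumption
    · rw [Finset.card_insert_of_notMem (by simp [Ne.symm hyx]), Finset.card_singleton]
  · intro y hy y' hy' hEq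
    have : y ∈ ({x, y'} : Finset α) := by rw [← hEq]; simp
    simp only [mem_insert, mem_singleton] at this
    rcases this with rfl | rfl
    · exact absurd rfl (Finset.mem_erase.1 hy).1
    · rfl
  · intro p hp
    simp only [mem_filter, Finset.mem_powersetCard] at hp
    obtain ⟨⟨hsub, hcard⟩, hxp⟩ := hp
    rw [Finset.card_eq_two] at hcard
    obtain ⟨a, c, hac, rfl⟩ := hcard
    simp only [mem_insert, mem_singleton] at hxp
    rcases hxp with rfl | rfl
    · exact ⟨c, Finset.mem_erase.2 ⟨fun h => hac h.symm, hsub (by simp)⟩, rfl⟩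
    · refine ⟨a, Finset.mem_erase.2 ⟨hac, hsub (by simp)⟩, ?_⟩
      rw [Finset.pair_comm]

lemma sum_lamF_pairs {v : ℕ} (F : Multiset (Finset (Fin v)))
    (hB : ∀ B ∈ F, B.card = 3) :
    ∑ p ∈ (univ : Finset (Fin v)).powersetCard 2, lamF F p = 3 * Multiset.card F := by
  rw [sum_lamF]
  rw [Multiset.map_congr rfl (fun B hBm => ?_), Multiset.map_const', Multiset.sum_replicate,
    smul_eq_mul, mul_comm]
  have h1 : ((univ : Finset (Fin v)).powersetCard 2).filter (fun p => p ⊆ B)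
      = B.powersetCard 2 := by
    ext q
    simp only [mem_filter, Finset.mem_powersetCard, Finset.subset_univ, true_and]
    tauto
  rw [h1, Finset.card_powersetCard, hB B hBm]
  decide

lemma even_sum_vertex {v : ℕ} (F : Multiset (Finset (Fin v)))
    (hB : ∀ B ∈ F, B.card = 3) (x : Fin v) :
    Even (∑ p ∈ ((univ : Finset (Fin v)).powersetCard 2).filter (fun p => x ∈ p),
      lamF F p) := by
  rw [sum_lamF, even_iff_two_dvd]
  apply Multiset.dvd_sum
  intro n hn
  rw [Multiset.mem_map] at hn
  obtain ⟨B, hBm, rfl⟩ := hn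
  have h1 : (((univ : Finset (Fin v)).powersetCard 2).filter (fun p => x ∈ p)).filter
      (fun p => p ⊆ B) = (B.powersetCard 2).filter (fun p => x ∈ p) := by
    ext q
    simp only [mem_filter, Finset.mem_powersetCard, Finset.subset_univ, true_and]
    tauto
  rw [h1]
  by_cases hx : x ∈ B
  · rw [card_pairs_mem B x hx, hB B hBm]
    decide
  · have h2 : (B.powersetCard 2).filter (fun p => x ∈ p) = ∅ := by
      rw [Finset.filter_eq_empty_iff]
      intro q hq hxq
      exact hx ((Finset.mem_powersetCard.1 hq).1 hxq)
    rw [h2]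
    simp

lemma int_abs_le_sq (a : ℤ) : |a| ≤ a ^ 2 := by
  rcases eq_or_ne a 0 with rfl | h
  · simp
  · have h1 : 1 ≤ |a| := Int.one_le_abs (by omega)
    calc |a| = 1 * |a| := (one_mul _).symm
    _ ≤ |a| * |a| := by apply mul_le_mul_of_nonneg_right h1 (abs_nonneg a)
    _ = a ^ 2 := by rw [← sq_abs]; ring


set_option maxHeartbeats 1000000 in
/-- lower bound and equality characterization under (C1). -/
theorem stmt_0 (v b l : ℕ) (e : ℤ)
    (hC1 : CondC1 v b) (hassoc : AssocPair v b l e)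
    (he : e = -2 ∨ e = -1 ∨ e = 1 ∨ e = 2) :
    ∀ F : Multiset (Finset (Fin v)), IsTSOn Finset.univ v b F →
      ((v.choose 2 : ℤ) * (l : ℤ) ^ 2 + 2 * e * l + 2 + |e| ≤
          ∑ p ∈ (Finset.univ : Finset (Fin v)).powersetCard 2, (lamF F p : ℤ) ^ 2) ∧
      ((∑ p ∈ (Finset.univ : Finset (Fin v)).powersetCard 2, (lamF F p : ℤ) ^ 2 =
          (v.choose 2 : ℤ) * (l : ℤ) ^ 2 + 2 * e * l + 2 + |e|) ↔
        ((PairRangeOn Finset.univ F l ∧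
            ((1 ≤ e ∧ ((Dlev Finset.univ F l 1).card : ℤ) = 1 + e ∧
                (Dlev Finset.univ F l (-1)).card = 1) ∨
             (e ≤ -1 ∧ (Dlev Finset.univ F l 1).card = 1 ∧
                ((Dlev Finset.univ F l (-1)).card : ℤ) = 1 - e))) ∨
         ((e = 2 ∨ e = -2) ∧
            (∀ p ∈ (Finset.univ : Finset (Fin v)).powersetCard 2,
              (lamF F p : ℤ) = l ∨ (lamF F p : ℤ) = (l : ℤ) + e) ∧
            (Dlev Finset.univ F l e).card = 1))) := by
  intro F hTS
  obtain ⟨hXcard, hFcard, hblocks⟩ := hTS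
  have hB3 : ∀ B ∈ F, B.card = 3 := fun B hB => (hblocks B hB).1
  set P : Finset (Finset (Fin v)) := (univ : Finset (Fin v)).powersetCard 2 with hPdef
  set d : Finset (Fin v) → ℤ := fun p => (lamF F p : ℤ) - l with hddef
  have hd : ∀ p, d p = (lamF F p : ℤ) - l := fun p => rfl
  have hv2 : v ≠ 2 := by
    rintro rfl
    obtain ⟨_, h1, h2⟩ := hassoc
    omega
  have hv5 : 5 ≤ v := by
    have h3 := hC1.1
    omega
  have hPcard : P.card = v.choose 2 := by
    rw [hPdef, Finset.card_powersetCard, Finset.card_univ, Fintype.card_fin]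
  have hchoose : 2 * (v.choose 2 : ℤ) = (v : ℤ) * ((v : ℤ) - 1) := by
    have h2 : 2 * (v.choose 2) = v * (v - 1) := by
      rw [Nat.choose_two_right, Nat.mul_div_cancel' (Nat.even_mul_pred_self v).two_dvd]
    have := congrArg (Nat.cast : ℕ → ℤ) h2
    push_cast [Nat.cast_sub (by omega : 1 ≤ v)] at this
    linarith
  have hsum1 : ∑ p ∈ P, (lamF F p : ℤ) = 3 * b := by
    have h := sum_lamF_pairs F hB3
    rw [hFcard] at h
    have := congrArg (Nat.cast : ℕ → ℤ) h
    push_cast at this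
    rw [hPdef]
    exact this
  have hsumd : ∑ p ∈ P, d p = e := by
    simp only [hd]
    rw [Finset.sum_sub_distrib, hsum1, Finset.sum_const, hPcard, nsmul_eq_mul]
    apply mul_left_cancel₀ (a := (2 : ℤ)) two_ne_zero
    have h6 := hassoc.1
    ring_nf
    ring_nf at h6 hchoose
    nlinarith [hchoose, h6]
  have hsq : ∑ p ∈ P, (lamF F p : ℤ) ^ 2
      = (v.choose 2 : ℤ) * (l : ℤ) ^ 2 + 2 * e * l + ∑ p ∈ P, d p ^ 2 := by
    have hexp : ∀ p ∈ P, (lamF F p : ℤ) ^ 2 = d p ^ 2 + 2 * (l : ℤ) * d p + (l : ℤ) ^ 2 := by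
      intro p _
      rw [hd]
      ring
    rw [Finset.sum_congr rfl hexp, Finset.sum_add_distrib, Finset.sum_add_distrib,
      ← Finset.mul_sum, hsumd, Finset.sum_const, hPcard, nsmul_eq_mul]
    ring
  set A : ℤ := ∑ p ∈ P, d p ^ 2 with hAdef
  have hA_abs : ∑ p ∈ P, |d p| ≤ A := Finset.sum_le_sum fun p _ => int_abs_le_sq (d p)
  have habs_sum_lb : |e| ≤ ∑ p ∈ P, |d p| := by
    rw [← hsumd]
    exact Finset.abs_sum_le_sum_abs _ _
  have hA_lb : |e| ≤ A := le_trans habs_sum_lb hA_abs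
  have hApar : Even (A - e) := by
    rw [hAdef, ← hsumd, ← Finset.sum_sub_distrib]
    apply Finset.even_sum
    intro p _
    have h : d p ^ 2 - d p = (d p - 1) * ((d p - 1) + 1) := by ring
    rw [h]
    exact Int.even_mul_succ_self _
  have hvert : ∀ x : Fin v, Even (∑ p ∈ P.filter (fun p => x ∈ p), (lamF F p : ℤ)) := by
    intro x
    have h := even_sum_vertex F hB3 x
    rw [← Nat.cast_sum]
    exact (Int.even_coe_nat _).2 h
  have hPfcard : ∀ x : Fin v, (P.filter (fun p => x ∈ p)).card = v - 1 := by
    intro x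
    have h := card_pairs_mem (univ : Finset (Fin v)) x (mem_univ x)
    rwa [Finset.card_univ, Fintype.card_fin] at h
  -- the key non-equality fact coming from vertex parity
  have hA_ne : A ≠ |e| := by
    intro hAe
    have hsum_abs : ∑ p ∈ P, |d p| = |e| :=
      le_antisymm (hA_abs.trans_eq hAe) habs_sum_lb
    have hptsq : ∀ p ∈ P, d p ^ 2 = |d p| := by
      have h0 : ∑ p ∈ P, (d p ^ 2 - |d p|) = 0 := by
        rw [Finset.sum_sub_distrib, hsum_abs, ← hAdef, hAe, sub_self]
      intro p hp
      have h1 := (Finset.sum_eq_zero_iff_of_nonneg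
        (fun q _ => sub_nonneg.2 (int_abs_le_sq (d q)))).1 h0 p hp
      linarith
    have hd1 : ∀ p ∈ P, |d p| ≤ 1 := by
      intro p hp
      by_contra hcon
      push_neg at hcon
      have h2 := hptsq p hp
      nlinarith [sq_abs (d p)]
    set E := P.filter (fun p => d p ≠ 0) with hEdef
    have hEsub : E ⊆ P := Finset.filter_subset _ _
    have hEcard : (E.card : ℤ) = |e| := by
      rw [← hsum_abs, ← Finset.sum_filter_add_sum_filter_not P (fun p => d p ≠ 0)]
      have hz : ∑ p ∈ P.filter (fun p => ¬d p ≠ 0), |d p| = 0 := by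
        apply Finset.sum_eq_zero
        intro p hp
        have := (Finset.mem_filter.1 hp).2
        push_neg at this
        rw [this, abs_zero]
      rw [hz, add_zero, ← hEdef]
      rw [Finset.sum_congr rfl (fun p hp => ?_), Finset.sum_const, nsmul_eq_mul, mul_one]
      have h1 := hd1 p (hEsub hp)
      have h2 := (Finset.mem_filter.1 hp).2
      rw [abs_le] at h1
      rcases (by omega : d p = 1 ∨ d p = -1) with h | h <;> rw [h] <;> norm_num
    have hE12 : E.card = 1 ∨ E.card = 2 := by
      rcases he with rfl | rfl | rfl | rfl <;> norm_num at hEcard <;> omega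
    have hdpm : ∀ p ∈ E, d p = 1 ∨ d p = -1 := by
      intro p hp
      have h1 := hd1 p (hEsub hp)
      have h2 := (Finset.mem_filter.1 hp).2
      rw [abs_le] at h1
      omega
    -- degree parity is the same at every vertex
    have key : ∀ x : Fin v,
        Even ((∑ p ∈ P.filter (fun p => x ∈ p), d p)
          - ((E.filter (fun p => x ∈ p)).card : ℤ)) := by
      intro x
      have hEf : (P.filter (fun p => x ∈ p)).filter (fun p => d p ≠ 0)
          = E.filter (fun p => x ∈ p) := by
        rw [hEdef, Finset.filter_filter, Finset.filter_filter]
        apply Finset.filter_congr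
        intro p _
        constructor
        · rintro ⟨h1, h2⟩; exact ⟨h2, h1⟩
        · rintro ⟨h1, h2⟩; exact ⟨h2, h1⟩
      have hsum_eq : ∑ p ∈ P.filter (fun p => x ∈ p), d p
          = ∑ p ∈ E.filter (fun p => x ∈ p), d p := by
        rw [← hEf, Finset.sum_filter_ne_zero]
      have hc : ((E.filter (fun p => x ∈ p)).card : ℤ)
          = ∑ p ∈ E.filter (fun p => x ∈ p), (1 : ℤ) := by
        rw [Finset.sum_const, nsmul_eq_mul, mul_one]
      rw [hsum_eq, hc, ← Finset.sum_sub_distrib]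
      apply Finset.even_sum
      intro p hp
      have hpE : p ∈ E := Finset.mem_of_mem_filter p hp
      rcases hdpm p hpE with h | h <;> rw [h] <;> decide
    have hSd : ∀ x : Fin v, ∑ p ∈ P.filter (fun p => x ∈ p), d p
        = (∑ p ∈ P.filter (fun p => x ∈ p), (lamF F p : ℤ)) - ((v - 1 : ℕ) : ℤ) * l := by
      intro x
      simp only [hd]
      rw [Finset.sum_sub_distrib, Finset.sum_const, hPfcard x, nsmul_eq_mul]
    have hparxz : ∀ x z : Fin v,
        ((E.filter (fun p => x ∈ p)).card : ℤ) % 2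
          = ((E.filter (fun p => z ∈ p)).card : ℤ) % 2 := by
      intro x z
      obtain ⟨a1, ha1⟩ := key x
      obtain ⟨a2, ha2⟩ := key z
      obtain ⟨c1, hc1⟩ := hvert x
      obtain ⟨c2, hc2⟩ := hvert z
      have hs1 := hSd x
      have hs2 := hSd z
      omega
    -- derive a contradiction
    rcases hE12 with h1 | h2
    · obtain ⟨p₀, hp₀⟩ := Finset.card_eq_one.1 h1
      have hp₀E : p₀ ∈ E := by rw [hp₀]; exact Finset.mem_singleton_self _
      have hp₀P : p₀ ∈ P := hEsub hp₀E
      rw [hPdef] at hp₀P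
      have hp₀card : p₀.card = 2 := (Finset.mem_powersetCard.1 hp₀P).2
      obtain ⟨x, hx⟩ := Finset.card_pos.1 (by omega : 0 < p₀.card)
      obtain ⟨z, hz⟩ : ∃ z : Fin v, z ∉ p₀ := by
        by_contra hcon
        push_neg at hcon
        have hsub : (univ : Finset (Fin v)) ⊆ p₀ := fun y _ => hcon y
        have hle := Finset.card_le_card hsub
        rw [Finset.card_univ, Fintype.card_fin] at hle
        omega
      have hdx : (E.filter (fun p => x ∈ p)).card = 1 := by
        rw [hp₀, Finset.filter_singleton, if_pos hx, Finset.card_singleton]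
      have hdz : (E.filter (fun p => z ∈ p)).card = 0 := by
        rw [hp₀, Finset.filter_singleton, if_neg hz, Finset.card_empty]
      have h := hparxz x z
      rw [hdx, hdz] at h
      norm_num at h
    · obtain ⟨p₁, p₂, hne, hp12⟩ := Finset.card_eq_two.1 h2
      have hp₁E : p₁ ∈ E := by rw [hp12]; simp
      have hp₂E : p₂ ∈ E := by rw [hp12]; simp
      have hp₁P : p₁ ∈ P := hEsub hp₁E
      have hp₂P : p₂ ∈ P := hEsub hp₂E
      rw [hPdef] at hp₁P hp₂P
      have hc₁ : p₁.card = 2 := (Finset.mem_powersetCard.1 hp₁P).2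
      have hc₂ : p₂.card = 2 := (Finset.mem_powersetCard.1 hp₂P).2
      obtain ⟨x, hx1, hx2⟩ := Finset.not_subset.1
        (fun hsub => hne (Finset.eq_of_subset_of_card_le hsub (by omega)))
      obtain ⟨z, hz1, hz2⟩ : ∃ z : Fin v, z ∉ p₁ ∧ z ∉ p₂ := by
        by_contra hcon
        push_neg at hcon
        have hsub : (univ : Finset (Fin v)) ⊆ p₁ ∪ p₂ := by
          intro y _
          by_cases hy : y ∈ p₁
          · exact Finset.mem_union_left _ hy
          · exact Finset.mem_union_right _ (hcon y hy)
        have hle := Finset.card_le_card hsub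
        have hle2 := Finset.card_union_le p₁ p₂
        rw [Finset.card_univ, Fintype.card_fin] at hle
        omega
      have hdx : (E.filter (fun p => x ∈ p)).card = 1 := by
        have hEq : E.filter (fun p => x ∈ p) = {p₁} := by
          rw [hp12]
          ext q
          simp only [Finset.mem_filter, Finset.mem_insert, Finset.mem_singleton]
          constructor
          · rintro ⟨h, hq⟩
            rcases h with rfl | rfl
            · rfl
            · exact absurd hq hx2
          · rintro rfl
            exact ⟨Or.inl rfl, hx1⟩
        rw [hEq, Finset.card_singleton]
      have hdz : (E.filter (fun p => z ∈ p)).card = 0 := by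
        rw [Finset.card_eq_zero, Finset.filter_eq_empty_iff]
        intro q hq
        rw [hp12] at hq
        rcases Finset.mem_insert.1 hq with rfl | hq2
        · exact hz1
        · rw [Finset.mem_singleton.1 hq2]
          exact hz2
      have h := hparxz x z
      rw [hdx, hdz] at h
      norm_num at h
  have hA_lb2 : |e| + 2 ≤ A := by
    obtain ⟨k, hk⟩ := hApar
    rcases abs_choice e with h | h <;> omega
  -- bridge to Dlev
  have hDlev : ∀ i : ℤ, Dlev Finset.univ F l i = P.filter (fun p => d p = i) := by
    intro i
    unfold Dlev
    rw [hPdef]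
    apply Finset.filter_congr
    intro p _
    rw [hd]
    constructor <;> intro h <;> omega
  have hcount : (∀ p ∈ P, d p = 0 ∨ d p = 1 ∨ d p = -1) →
      A = ((P.filter (fun p => d p = 1)).card : ℤ)
          + ((P.filter (fun p => d p = -1)).card : ℤ)
        ∧ e = ((P.filter (fun p => d p = 1)).card : ℤ)
          - ((P.filter (fun p => d p = -1)).card : ℤ) := by
    intro h3
    have h1 : A = ∑ p ∈ P,
        ((if d p = 1 then (1 : ℤ) else 0) + (if d p = -1 then (1 : ℤ) else 0)) := by
      rw [hAdef]
      apply Finset.sum_congr rfl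
      intro p hp
      rcases h3 p hp with h | h | h <;> rw [h] <;> norm_num
    have h2 : e = ∑ p ∈ P,
        ((if d p = 1 then (1 : ℤ) else 0) - (if d p = -1 then (1 : ℤ) else 0)) := by
      rw [← hsumd]
      apply Finset.sum_congr rfl
      intro p hp
      rcases h3 p hp with h | h | h <;> rw [h] <;> norm_num
    constructor
    · rw [h1, Finset.sum_add_distrib, Finset.sum_boole, Finset.sum_boole]
    · rw [h2, Finset.sum_sub_distrib, Finset.sum_boole, Finset.sum_boole]
  refine ⟨by rw [hsq]; linarith, ?_, ?_⟩
  · -- forward direction of the characterization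
    intro hEq
    have hAeq : A = 2 + |e| := by
      rw [hsq] at hEq
      linarith
    by_cases hall : ∀ p ∈ P, d p = 0 ∨ d p = 1 ∨ d p = -1
    · left
      obtain ⟨hA2, hE2⟩ := hcount hall
      refine ⟨?_, ?_⟩
      · intro p hp
        have h := hall p hp
        rw [hd] at h
        omega
      · rw [hDlev 1, hDlev (-1)]
        rcases he with rfl | rfl | rfl | rfl
        · right
          norm_num at hAeq ⊢
          omega
        · right
          norm_num at hAeq ⊢
          omega
        · left
          norm_num at hAeq ⊢
          omega
        · left
          norm_num at hAeq ⊢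
          omega
    · right
      push_neg at hall
      obtain ⟨p, hp, hp0, hp1, hpm1⟩ := hall
      have hdp2 : 4 ≤ d p ^ 2 := by
        have h : d p ≤ -2 ∨ 2 ≤ d p := by omega
        rcases h with h | h <;> nlinarith
      have habse : |e| ≤ 2 := by rcases he with rfl | rfl | rfl | rfl <;> norm_num
      have hsplit : d p ^ 2 + ∑ q ∈ P.erase p, d q ^ 2 = A := by
        rw [hAdef]
        exact Finset.add_sum_erase P (fun q => d q ^ 2) hp
      have hz : ∑ q ∈ P.erase p, d q ^ 2 = 0 := by
        have hnn : 0 ≤ ∑ q ∈ P.erase p, d q ^ 2 :=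
          Finset.sum_nonneg fun q _ => sq_nonneg _
        linarith
      have hrest : ∀ q ∈ P.erase p, d q = 0 := by
        intro q hq
        have h := (Finset.sum_eq_zero_iff_of_nonneg fun q _ => sq_nonneg (d q)).1 hz q hq
        exact (pow_eq_zero_iff (by norm_num : (2:ℕ) ≠ 0)).1 h
      have hdpe : d p = e := by
        have h : ∑ q ∈ P, d q = d p + ∑ q ∈ P.erase p, d q :=
          (Finset.add_sum_erase P (fun q => d q) hp).symm
        rw [Finset.sum_eq_zero hrest, add_zero, hsumd] at h
        omega
      have hval : d p ^ 2 = 2 + |e| := by linarith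
      have he2 : e = 2 ∨ e = -2 := by
        rcases he with rfl | rfl | rfl | rfl <;> rw [hdpe] at hval <;> norm_num at hval
        · right; rfl
        · left; rfl
      refine ⟨he2, ?_, ?_⟩
      · intro q hq
        by_cases hqp : q = p
        · right
          subst hqp
          rw [hd] at hdpe
          omega
        · left
          have h := hrest q (Finset.mem_erase.2 ⟨hqp, hq⟩)
          rw [hd] at h
          omega
      · rw [hDlev e]
        have hsingle : P.filter (fun q => d q = e) = {p} := by
          ext q
          simp only [Finset.mem_filter, Finset.mem_singleton]
          constructor
          · rintro ⟨hqP, hqe⟩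
            by_contra hne
            have h := hrest q (Finset.mem_erase.2 ⟨hne, hqP⟩)
            rcases he2 with h2 | h2 <;> omega
          · rintro rfl
            exact ⟨hp, hdpe⟩
        rw [hsingle, Finset.card_singleton]
  · -- backward direction
    intro hshape
    have hAeq : A = 2 + |e| := by
      rcases hshape with ⟨hPR, hcs⟩ | ⟨he2, hall, hcard1⟩
      · have h3 : ∀ p ∈ P, d p = 0 ∨ d p = 1 ∨ d p = -1 := by
          intro p hp
          have h := hPR p hp
          rw [hd]
          omega
        obtain ⟨hA2, hE2⟩ := hcount h3
        rcases hcs with ⟨h1e, hk1, hk2⟩ | ⟨h1e, hk1, hk2⟩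
        · rw [hDlev 1] at hk1
          rw [hDlev (-1)] at hk2
          rw [hA2, hk1, hk2, abs_of_pos (by linarith : (0:ℤ) < e)]
          push_cast
          ring
        · rw [hDlev 1] at hk1
          rw [hDlev (-1)] at hk2
          rw [hA2, hk1, hk2, abs_of_neg (by linarith : e < (0:ℤ))]
          push_cast
          ring
      · have h4 : ∀ q ∈ P, d q = 0 ∨ d q = e := by
          intro q hq
          rcases hall q hq with h | h <;> rw [hd] <;> omega
        have hA4 : A = ((P.filter (fun q => d q = e)).card : ℤ) * e ^ 2 := by
          rw [hAdef, ← Finset.sum_filter_add_sum_filter_not P (fun q => d q = e)]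
          have h5 : ∑ q ∈ P.filter (fun q => ¬d q = e), d q ^ 2 = 0 := by
            apply Finset.sum_eq_zero
            intro q hq
            have h6 := (Finset.mem_filter.1 hq).2
            rcases h4 q (Finset.mem_of_mem_filter q hq) with h | h
            · rw [h]; ring
            · exact absurd h h6
          have h7 : ∑ q ∈ P.filter (fun q => d q = e), d q ^ 2
              = ((P.filter (fun q => d q = e)).card : ℤ) * e ^ 2 := by
            rw [Finset.sum_congr rfl (fun q hq => ?_), Finset.sum_const, nsmul_eq_mul]
            rw [(Finset.mem_filter.1 hq).2]
          rw [h5, add_zero, h7]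
        rw [hDlev e] at hcard1
        rw [hA4, hcard1]
        rcases he2 with rfl | rfl <;> norm_num
    rw [hsq, hAeq]
    ring


end DataPlacement
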